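/- arXiv:0907.5427 — 3 statements merged into one kernel-verified Lean document; each statement's English description precedes it below -/
import Mathlib

section
/- Let V be a finite set and let u, v, a, b ∈ V be four pairwise distinct elements. For the betweenness constraints C_l = (a, {u, v}) and C_{l′} = (b, {u, v}), one has E[w(C_l, φ)·w(C_{l′}, φ)] = 36/768, where the expectation is over φ chosen uniformly at random from the 4^{|V|} functions V → {0,1,2,3}. -/
open scoped Classical

noncomputable section

/-- A betweenness constraint `(v, {x, y})`: a variable together with an unordered pair. -/
abbrev Constraint (V : Type*) := V × Sym2 V

/-- The elements of a betweenness constraint are pairwise distinct. -/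
def IsProperConstraint {V : Type*} (C : Constraint V) : Prop :=
  ∃ x y, C.2 = s(x, y) ∧ x ≠ y ∧ C.1 ≠ x ∧ C.1 ≠ y

/-- A bijection `α : V → {1, …, |V|}` satisfies the constraint `(v, {x, y})` if
`α x < α v < α y` or `α y < α v < α x`. -/
def Satisfies {V : Type*} [Fintype V] (α : V ≃ Fin (Fintype.card V)) (C : Constraint V) : Prop :=
  ∃ x y, C.2 = s(x, y) ∧ α x < α C.1 ∧ α C.1 < α y

/-- The number of constraints of `𝒞` satisfied by `α`. -/
def satCount {V : Type*} [Fintype V] (α : V ≃ Fin (Fintype.card V))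
    (𝒞 : Finset (Constraint V)) : ℕ :=
  (𝒞.filter fun C => Satisfies α C).card

/-- The complete triple of betweenness constraints on `{u, v, w}`. -/
def completeTriple {V : Type*} [DecidableEq V] (u v w : V) : Finset (Constraint V) :=
  {(u, s(v, w)), (v, s(u, w)), (w, s(u, v))}

/-- An instance is irreducible if it contains no complete triple. -/
def IrreducibleInstance {V : Type*} [DecidableEq V] (𝒞 : Finset (Constraint V)) : Prop :=
  ¬ ∃ u v w : V, u ≠ v ∧ u ≠ w ∧ v ≠ w ∧ completeTriple u v w ⊆ 𝒞

/-- The weight `w(C, φ)` of a constraint `(vᵢ, {vⱼ, vₖ})` under `φ : V → {0,1,2,3}`. -/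
def weight {V : Type*} (φ : V → Fin 4) (C : Constraint V) : ℝ :=
  if (C.2.map φ).IsDiag ∧ φ C.1 ∈ C.2.map φ then 0
  else if (C.2.map φ).IsDiag then -1/3
  else if φ C.1 ∈ C.2.map φ then 1/6
  else if ∃ x y : Fin 4, C.2.map φ = s(x, y) ∧ x < φ C.1 ∧ φ C.1 < y then 2/3
  else -1/3

/-- `α` is `φ`-compatible if `φ u < φ v` implies `α u < α v`. -/
def Compatible {V : Type*} [Fintype V] (φ : V → Fin 4)
    (α : V ≃ Fin (Fintype.card V)) : Prop :=
  ∀ u v : V, φ u < φ v → α u < α v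

def Wfun (i j k : Fin 4) : ℝ :=
  if j = k ∧ (i = j ∨ i = k) then 0
  else if j = k then -1/3
  else if i = j ∨ i = k then 1/6
  else if (j < i ∧ i < k) ∨ (k < i ∧ i < j) then 2/3
  else -1/3

lemma weight_eq {V : Type*} (φ : V → Fin 4) (c x y : V) :
    weight φ (c, s(x, y)) = Wfun (φ c) (φ x) (φ y) := by
  have hex : (∃ x' y' : Fin 4, s(φ x, φ y) = s(x', y') ∧ x' < φ c ∧ φ c < y')
      ↔ ((φ x < φ c ∧ φ c < φ y) ∨ (φ y < φ c ∧ φ c < φ x)) := by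
    constructor
    · rintro ⟨x', y', h, h1, h2⟩
      rw [Sym2.eq_iff] at h
      rcases h with ⟨rfl, rfl⟩ | ⟨rfl, rfl⟩ <;> tauto
    · rintro (⟨h1, h2⟩ | ⟨h1, h2⟩)
      exacts [⟨_, _, rfl, h1, h2⟩, ⟨_, _, Sym2.eq_swap.symm, h1, h2⟩]
  simp only [weight, Wfun, Sym2.map_pair_eq, Sym2.mk_isDiag_iff, Sym2.mem_iff, hex]

lemma sum_quad (f : Fin 4 → Fin 4 → Fin 4 → Fin 4 → ℝ) :
    ∑ k : Fin 4 → Fin 4, f (k 0) (k 1) (k 2) (k 3)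
      = ∑ c0 : Fin 4, ∑ c1 : Fin 4, ∑ c2 : Fin 4, ∑ c3 : Fin 4, f c0 c1 c2 c3 := by
  rw [← (Fin.consEquiv fun _ => Fin 4).sum_comp, Fintype.sum_prod_type]
  refine Finset.sum_congr rfl fun c0 _ => ?_
  rw [← (Fin.consEquiv fun _ => Fin 4).sum_comp, Fintype.sum_prod_type]
  refine Finset.sum_congr rfl fun c1 _ => ?_
  rw [← (Fin.consEquiv fun _ => Fin 4).sum_comp, Fintype.sum_prod_type]
  refine Finset.sum_congr rfl fun c2 _ => ?_
  rw [← (Fin.consEquiv fun _ => Fin 4).sum_comp, Fintype.sum_prod_type]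
  refine Finset.sum_congr rfl fun c3 _ => ?_
  rw [Fintype.sum_unique]
  rfl

lemma quad_val :
    ∑ c0 : Fin 4, ∑ c1 : Fin 4, ∑ c2 : Fin 4, ∑ c3 : Fin 4,
      Wfun c2 c0 c1 * Wfun c3 c0 c1 = 12 := by
  simp (config := { decide := true }) only [Fin.sum_univ_four, Wfun]
  norm_num

theorem expectation_product_share_pair
    {V : Type*} [Fintype V] [DecidableEq V] (u v a b : V)
    (hdist : ([u, v, a, b] : List V).Pairwise (· ≠ ·)) :
    (∑ φ : V → Fin 4, weight φ (a, s(u, v)) * weight φ (b, s(u, v)))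
      / 4 ^ Fintype.card V = 36 / 768 := by
  simp only [List.pairwise_cons, List.mem_cons, List.mem_singleton, List.not_mem_nil,
    forall_eq_or_imp, forall_eq, false_implies, implies_true, and_true,
    List.Pairwise.nil] at hdist
  obtain ⟨⟨huv, hua, hub⟩, ⟨hva, hvb⟩, hab⟩ := hdist
  set S : Finset V := {u, v, a, b} with hS
  have hu : u ∈ S := by simp [hS]
  have hv : v ∈ S := by simp [hS]
  have ha : a ∈ S := by simp [hS]
  have hb : b ∈ S := by simp [hS]
  have hcardS : Fintype.card {x // x ∈ S} = 4 := by
    rw [Fintype.card_coe]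
    simp [hS, Finset.card_insert_of_notMem, Finset.mem_insert, Finset.mem_singleton,
      huv, hua, hub, hva, hvb, hab]
  have h4 : 4 ≤ Fintype.card V := by
    rw [← hcardS]
    exact Fintype.card_le_of_injective Subtype.val Subtype.val_injective
  -- the equiv from Fin 4 onto the subtype
  let t : Fin 4 → {x // x ∈ S} := ![⟨u, hu⟩, ⟨v, hv⟩, ⟨a, ha⟩, ⟨b, hb⟩]
  have htbij : Function.Bijective t := by
    constructor
    · intro i j hij
      have h' := congrArg Subtype.val hij
      fin_cases i <;> fin_cases j <;>
        first
        | rfl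
        | exact absurd h' huv | exact absurd h'.symm huv
        | exact absurd h' hua | exact absurd h'.symm hua
        | exact absurd h' hub | exact absurd h'.symm hub
        | exact absurd h' hva | exact absurd h'.symm hva
        | exact absurd h' hvb | exact absurd h'.symm hvb
        | exact absurd h' hab | exact absurd h'.symm hab
    · rintro ⟨x, hx⟩
      simp only [hS, Finset.mem_insert, Finset.mem_singleton] at hx
      rcases hx with rfl | rfl | rfl | rfl
      exacts [⟨0, rfl⟩, ⟨1, rfl⟩, ⟨2, rfl⟩, ⟨3, rfl⟩]
  let te : Fin 4 ≃ {x // x ∈ S} := Equiv.ofBijective t htbij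
  have key : (∑ φ : V → Fin 4, weight φ (a, s(u, v)) * weight φ (b, s(u, v)))
      = 4 ^ (Fintype.card V - 4) * 12 := by
    have h1 : ∀ φ : V → Fin 4, weight φ (a, s(u, v)) * weight φ (b, s(u, v))
        = Wfun (φ a) (φ u) (φ v) * Wfun (φ b) (φ u) (φ v) := fun φ => by
      rw [weight_eq, weight_eq]
    simp only [h1]
    let e := Equiv.piEquivPiSubtypeProd (fun x : V => x ∈ S) (fun _ => Fin 4)
    rw [← e.symm.sum_comp, Fintype.sum_prod_type]
    have happ : ∀ (g : ∀ _ : {x // x ∈ S}, Fin 4) (h : ∀ _ : {x // ¬ x ∈ S}, Fin 4)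
        (w : V) (hw : w ∈ S), e.symm (g, h) w = g ⟨w, hw⟩ := by
      intro g h w hw
      simp [e, Equiv.piEquivPiSubtypeProd_symm_apply, dif_pos hw]
    have hinner : ∀ g : ∀ _ : {x // x ∈ S}, Fin 4,
        (∑ h : ∀ _ : {x // ¬ x ∈ S}, Fin 4,
          Wfun (e.symm (g, h) a) (e.symm (g, h) u) (e.symm (g, h) v) *
            Wfun (e.symm (g, h) b) (e.symm (g, h) u) (e.symm (g, h) v))
        = 4 ^ (Fintype.card V - 4) *
          (Wfun (g ⟨a, ha⟩) (g ⟨u, hu⟩) (g ⟨v, hv⟩) *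
            Wfun (g ⟨b, hb⟩) (g ⟨u, hu⟩) (g ⟨v, hv⟩)) := by
      intro g
      have : ∀ h : ∀ _ : {x // ¬ x ∈ S}, Fin 4,
          Wfun (e.symm (g, h) a) (e.symm (g, h) u) (e.symm (g, h) v) *
            Wfun (e.symm (g, h) b) (e.symm (g, h) u) (e.symm (g, h) v)
          = Wfun (g ⟨a, ha⟩) (g ⟨u, hu⟩) (g ⟨v, hv⟩) *
              Wfun (g ⟨b, hb⟩) (g ⟨u, hu⟩) (g ⟨v, hv⟩) := fun h => by
        rw [happ g h a ha, happ g h u hu, happ g h v hv, happ g h b hb]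
      rw [Finset.sum_congr rfl fun h _ => this h, Finset.sum_const, Finset.card_univ,
        nsmul_eq_mul]
      congr 1
      rw [Fintype.card_fun, Fintype.card_fin, Fintype.card_subtype_compl, hcardS]
      push_cast
      rfl
    rw [Finset.sum_congr rfl fun g _ => hinner g, ← Finset.mul_sum]
    congr 1
    have hbij : Function.Bijective (fun g : ({x // x ∈ S} → Fin 4) => g ∘ t) := by
      constructor
      · intro g₁ g₂ h
        funext x
        have hx := congrFun h (te.symm x)
        have hx2 : t (te.symm x) = x := te.apply_symm_apply x
        simpa [Function.comp, hx2] using hx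
      · intro k
        refine ⟨k ∘ te.symm, funext fun i => ?_⟩
        have : te.symm (t i) = i := te.symm_apply_apply i
        simp [Function.comp, this]
    have hsum := Fintype.sum_bijective (fun g : ({x // x ∈ S} → Fin 4) => g ∘ t) hbij
      (fun g => Wfun (g ⟨a, ha⟩) (g ⟨u, hu⟩) (g ⟨v, hv⟩) *
        Wfun (g ⟨b, hb⟩) (g ⟨u, hu⟩) (g ⟨v, hv⟩))
      (fun k => Wfun (k 2) (k 0) (k 1) * Wfun (k 3) (k 0) (k 1))
      (fun g => rfl)
    exact hsum.trans
      ((sum_quad (fun c0 c1 c2 c3 => Wfun c2 c0 c1 * Wfun c3 c0 c1)).trans quad_val)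
  rw [key]
  have hpow : (4 : ℝ) ^ Fintype.card V = 4 ^ (Fintype.card V - 4) * 4 ^ 4 := by
    rw [← pow_add]
    congr 1
    omega
  rw [hpow]
  rw [mul_div_mul_left _ _ (by positivity : (4 : ℝ) ^ (Fintype.card V - 4) ≠ 0)]
  norm_num


end
end

section
/- Let V be a finite set and let u, v, w ∈ V be three pairwise distinct elements. For the betweenness constraints C_l = (u, {v, w}) and C_{l′} = (v, {u, w}), one has E[w(C_l, φ)·w(C_{l′}, φ)] = −44/768, where the expectation is over φ chosen uniformly at random from the 4^{|V|} functions V → {0,1,2,3}. -/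
open scoped Classical

noncomputable section

def Wq (a b c : Fin 4) : ℚ :=
  if b = c then (if a = b then 0 else -1/3)
  else if a = b ∨ a = c then 1/6
  else if (b < a ∧ a < c) ∨ (c < a ∧ a < b) then 2/3
  else -1/3

lemma weight_eq_s16 {V : Type*} (φ : V → Fin 4) (u v w : V) :
    weight φ (u, s(v, w)) = ((Wq (φ u) (φ v) (φ w) : ℚ) : ℝ) := by
  have hbtw : (∃ x y : Fin 4, (s(φ v, φ w) : Sym2 (Fin 4)) = s(x,y) ∧ x < φ u ∧ φ u < y)
      ↔ ((φ v < φ u ∧ φ u < φ w) ∨ (φ w < φ u ∧ φ u < φ v)) := by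
    constructor
    · rintro ⟨x, y, hxy, h1, h2⟩
      rw [Sym2.eq_iff] at hxy
      rcases hxy with ⟨rfl, rfl⟩ | ⟨rfl, rfl⟩
      · exact Or.inl ⟨h1, h2⟩
      · exact Or.inr ⟨h1, h2⟩
    · rintro (⟨h1, h2⟩ | ⟨h1, h2⟩)
      · exact ⟨φ v, φ w, rfl, h1, h2⟩
      · exact ⟨φ w, φ v, Sym2.eq_swap, h1, h2⟩
  simp only [weight, Wq, Sym2.map_pair_eq, Sym2.mk_isDiag_iff, Sym2.mem_iff, hbtw]
  clear hbtw
  split_ifs <;> simp_all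

lemma fiber_card {V : Type*} [Fintype V] [DecidableEq V] (u v w : V)
    (huv : u ≠ v) (huw : u ≠ w) (hvw : v ≠ w) (t : Fin 4 × Fin 4 × Fin 4) :
    (Finset.univ.filter fun φ : V → Fin 4 => (φ u, φ v, φ w) = t).card
      = 4 ^ (Fintype.card V - 3) := by
  obtain ⟨a, b, c⟩ := t
  rw [← Fintype.card_subtype]
  have e : {φ : V → Fin 4 // (φ u, φ v, φ w) = (a, b, c)}
      ≃ ({x : V // x ∉ ({u, v, w} : Finset V)} → Fin 4) :=
    { toFun := fun φ x => φ.1 x.1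
      invFun := fun g =>
        ⟨fun x => if hx : x ∉ ({u, v, w} : Finset V) then g ⟨x, hx⟩
          else if x = u then a else if x = v then b else c, by
          have hu : u ∈ ({u, v, w} : Finset V) := by simp
          have hv : v ∈ ({u, v, w} : Finset V) := by simp
          have hw : w ∈ ({u, v, w} : Finset V) := by simp
          simp [hu, hv, hw, huv.symm, huw.symm, hvw.symm]⟩
      left_inv := by
        rintro ⟨φ, hφ⟩
        simp only [Prod.mk.injEq] at hφ
        obtain ⟨ha, hb, hc⟩ := hφ
        ext x
        by_cases hx : x ∉ ({u, v, w} : Finset V)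
        · simp [hx]
        · simp only [Finset.mem_insert, Finset.mem_singleton, not_not] at hx
          rcases hx with rfl | rfl | rfl <;>
            simp [huv.symm, huw.symm, hvw.symm, ha, hb, hc]
      right_inv := by
        intro g
        ext x
        simp [x.2] }
  rw [Fintype.card_congr e, Fintype.card_fun, Fintype.card_fin]
  congr 1
  rw [Fintype.card_subtype_compl, Fintype.card_coe]
  congr 1
  rw [Finset.card_insert_of_notMem (by simp [huv, huw]),
    Finset.card_insert_of_notMem (by simp [hvw]), Finset.card_singleton]

lemma sumWq : (∑ t : Fin 4 × Fin 4 × Fin 4, Wq t.1 t.2.1 t.2.2 * Wq t.2.1 t.1 t.2.2)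
    = -11/3 := by
  simp only [Fintype.sum_prod_type, Fin.sum_univ_four]
  simp (config := { decide := true }) only [Wq]
  norm_num

theorem expectation_product_same_vars
    {V : Type*} [Fintype V] [DecidableEq V] (u v w : V)
    (huv : u ≠ v) (huw : u ≠ w) (hvw : v ≠ w) :
    (∑ φ : V → Fin 4, weight φ (u, s(v, w)) * weight φ (v, s(u, w)))
      / 4 ^ Fintype.card V = -(44 / 768) := by
  have h3 : 3 ≤ Fintype.card V := by
    have : ({u, v, w} : Finset V).card = 3 := by
      rw [Finset.card_insert_of_notMem (by simp [huv, huw]),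
        Finset.card_insert_of_notMem (by simp [hvw]), Finset.card_singleton]
    calc 3 = ({u, v, w} : Finset V).card := this.symm
      _ ≤ Fintype.card V := Finset.card_le_univ _
  have key : (∑ φ : V → Fin 4, weight φ (u, s(v, w)) * weight φ (v, s(u, w)))
      = (4 : ℝ) ^ (Fintype.card V - 3) * (-11/3) := by
    have h1 : ∀ φ : V → Fin 4, weight φ (u, s(v, w)) * weight φ (v, s(u, w))
        = ((Wq (φ u) (φ v) (φ w) * Wq (φ v) (φ u) (φ w) : ℚ) : ℝ) := by
      intro φ
      rw [weight_eq_s16 φ u v w, weight_eq_s16 φ v u w]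
      push_cast
      ring
    calc (∑ φ : V → Fin 4, weight φ (u, s(v, w)) * weight φ (v, s(u, w)))
        = ∑ t : Fin 4 × Fin 4 × Fin 4, ∑ φ ∈ Finset.univ.filter
            (fun φ : V → Fin 4 => (φ u, φ v, φ w) = t),
            weight φ (u, s(v, w)) * weight φ (v, s(u, w)) := by
          rw [Finset.sum_fiberwise]
      _ = ∑ t : Fin 4 × Fin 4 × Fin 4,
            (Finset.univ.filter (fun φ : V → Fin 4 => (φ u, φ v, φ w) = t)).card
              • ((Wq t.1 t.2.1 t.2.2 * Wq t.2.1 t.1 t.2.2 : ℚ) : ℝ) := by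
          refine Finset.sum_congr rfl fun t _ => ?_
          rw [← Finset.sum_const]
          refine Finset.sum_congr rfl fun φ hφ => ?_
          simp only [Finset.mem_filter] at hφ
          rw [h1 φ, ← hφ.2]
      _ = ∑ t : Fin 4 × Fin 4 × Fin 4,
            (4 : ℝ) ^ (Fintype.card V - 3) * ((Wq t.1 t.2.1 t.2.2 * Wq t.2.1 t.1 t.2.2 : ℚ) : ℝ) := by
          refine Finset.sum_congr rfl fun t _ => ?_
          rw [fiber_card u v w huv huw hvw t, nsmul_eq_mul]
          push_cast
          ring
      _ = (4 : ℝ) ^ (Fintype.card V - 3) * (-11/3) := by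
          rw [← Finset.mul_sum, ← Rat.cast_sum, sumWq]
          norm_num
  rw [key]
  have hpow : (4 : ℝ) ^ Fintype.card V = 4 ^ (Fintype.card V - 3) * 64 := by
    conv_lhs => rw [← Nat.sub_add_cancel h3]
    rw [pow_add]
    norm_num
  rw [hpow]
  have h4 : (4 : ℝ) ^ (Fintype.card V - 3) ≠ 0 := by positivity
  field_simp
  ring


end
end

section
/- Let V be a finite set with |V| = n and let 𝒞 be a finite set of betweenness constraints over V. For each fixed constraint, exactly n!/3 of the n! bijections α : V → {1, …, n} satisfy it. Consequently, there exists a bijection α : V → {1, …, n} satisfying at least |𝒞|/3 of the constraints in 𝒞. -/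
open scoped Classical

noncomputable section

lemma sat_iff {V : Type*} [Fintype V] (α : V ≃ Fin (Fintype.card V)) (v x y : V) :
    Satisfies α (v, s(x,y)) ↔ (α x < α v ∧ α v < α y) ∨ (α y < α v ∧ α v < α x) := by
  constructor
  · rintro ⟨a, b, hab, h1, h2⟩
    rw [Sym2.eq_iff] at hab
    rcases hab with ⟨rfl, rfl⟩ | ⟨rfl, rfl⟩
    · exact Or.inl ⟨h1, h2⟩
    · exact Or.inr ⟨h1, h2⟩
  · rintro (⟨h1,h2⟩|⟨h1,h2⟩)
    · exact ⟨x, y, rfl, h1, h2⟩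
    · exact ⟨y, x, Sym2.eq_swap.symm, h1, h2⟩

lemma card_swap {V : Type*} [Fintype V] [DecidableEq V] (a b c : V)
    (hab : a ≠ b) (hac : a ≠ c) (hbc : b ≠ c) :
    ((Finset.univ : Finset (V ≃ Fin (Fintype.card V))).filter
      (fun α => (α b < α a ∧ α a < α c) ∨ (α c < α a ∧ α a < α b))).card
    = ((Finset.univ : Finset (V ≃ Fin (Fintype.card V))).filter
      (fun α => (α a < α b ∧ α b < α c) ∨ (α c < α b ∧ α b < α a))).card := by
  apply Finset.card_equiv
    ⟨fun α => (Equiv.swap a b).trans α, fun α => (Equiv.swap a b).trans α,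
     fun α => by ext u; simp [Equiv.swap_apply_self],
     fun α => by ext u; simp [Equiv.swap_apply_self]⟩
  intro α
  simp only [Finset.mem_filter, Finset.mem_univ, true_and, Equiv.coe_fn_mk, Equiv.trans_apply,
    Equiv.swap_apply_left, Equiv.swap_apply_right,
    Equiv.swap_apply_of_ne_of_ne hac.symm hbc.symm]

lemma count_third {V : Type*} [Fintype V] [DecidableEq V] (v x y : V)
    (hxy : x ≠ y) (hvx : v ≠ x) (hvy : v ≠ y) :
    3 * ((Finset.univ : Finset (V ≃ Fin (Fintype.card V))).filter
        (fun α => Satisfies α (v, s(x,y)))).card = Nat.factorial (Fintype.card V) := by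
  classical
  set n := Fintype.card V with hn
  set P : (V ≃ Fin n) → Prop :=
    fun α => (α x < α v ∧ α v < α y) ∨ (α y < α v ∧ α v < α x) with hP
  set Q : (V ≃ Fin n) → Prop :=
    fun α => (α v < α x ∧ α x < α y) ∨ (α y < α x ∧ α x < α v) with hQ
  set R : (V ≃ Fin n) → Prop :=
    fun α => (α x < α y ∧ α y < α v) ∨ (α v < α y ∧ α y < α x) with hR
  have hfP : (Finset.univ.filter (fun α : V ≃ Fin n => Satisfies α (v, s(x,y))))
      = Finset.univ.filter P := by
    apply Finset.filter_congr
    intro α _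
    simp [sat_iff, hP]
  have hPQ : (Finset.univ.filter P).card = (Finset.univ.filter Q).card := by
    simpa [hP, hQ] using card_swap v x y hvx hvy hxy
  have hPR : (Finset.univ.filter P).card = (Finset.univ.filter R).card := by
    have h1 : (Finset.univ.filter P) = Finset.univ.filter
        (fun α : V ≃ Fin n => (α y < α v ∧ α v < α x) ∨ (α x < α v ∧ α v < α y)) := by
      apply Finset.filter_congr; intro α _; simp [hP]; tauto
    have h2 : (Finset.univ.filter R) = Finset.univ.filter
        (fun α : V ≃ Fin n => (α v < α y ∧ α y < α x) ∨ (α x < α y ∧ α y < α v)) := by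
      apply Finset.filter_congr; intro α _; simp [hR]; tauto
    rw [h1, h2]
    exact card_swap v y x hvy hvx hxy.symm
  have tri : ∀ α : V ≃ Fin n, (P α ∧ ¬Q α ∧ ¬R α) ∨ (¬P α ∧ Q α ∧ ¬R α)
      ∨ (¬P α ∧ ¬Q α ∧ R α) := by
    intro α
    have h1 : (α v : ℕ) ≠ (α x : ℕ) :=
      Fin.val_ne_of_ne (fun h => hvx (α.injective h))
    have h2 : (α v : ℕ) ≠ (α y : ℕ) :=
      Fin.val_ne_of_ne (fun h => hvy (α.injective h))
    have h3 : (α x : ℕ) ≠ (α y : ℕ) :=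
      Fin.val_ne_of_ne (fun h => hxy (α.injective h))
    simp only [hP, hQ, hR, Fin.lt_def]
    omega
  have hcard : Fintype.card (V ≃ Fin n) = Nat.factorial n := by
    rw [Fintype.card_equiv (Fintype.equivFin V)]
  have hsplit : (Finset.univ.filter P).card + (Finset.univ.filter Q).card
      + (Finset.univ.filter R).card = Nat.factorial n := by
    rw [← hcard, ← Finset.card_univ]
    rw [Finset.card_filter, Finset.card_filter, Finset.card_filter,
      ← Finset.sum_add_distrib, ← Finset.sum_add_distrib, Finset.card_eq_sum_ones]
    apply Finset.sum_congr rfl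
    intro α _
    rcases tri α with ⟨h1,h2,h3⟩ | ⟨h1,h2,h3⟩ | ⟨h1,h2,h3⟩ <;>
      simp only [hP, hQ, hR] at h1 h2 h3 <;> simp [h1, h2, h3]
  rw [hfP, ← hsplit, ← hPQ, ← hPR]
  ring

theorem third_of_bijections_satisfy_and_third_of_constraints_satisfiable
    {V : Type*} [Fintype V] [DecidableEq V]
    (𝒞 : Finset (Constraint V)) (h𝒞 : ∀ C ∈ 𝒞, IsProperConstraint C) :
    (∀ C : Constraint V, IsProperConstraint C →
        3 * ((Finset.univ : Finset (V ≃ Fin (Fintype.card V))).filter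
            (fun α => Satisfies α C)).card
          = Nat.factorial (Fintype.card V)) ∧
    ∃ α : V ≃ Fin (Fintype.card V), (𝒞.card : ℝ) / 3 ≤ satCount α 𝒞 := by
  classical
  have main : ∀ C : Constraint V, IsProperConstraint C →
      3 * ((Finset.univ : Finset (V ≃ Fin (Fintype.card V))).filter
          (fun α => Satisfies α C)).card = Nat.factorial (Fintype.card V) := by
    intro C hC
    obtain ⟨x, y, h2, hxy, hvx, hvy⟩ := hC
    rw [show C = (C.1, s(x,y)) from Prod.ext rfl h2]
    exact count_third C.1 x y hxy hvx hvy
  refine ⟨main, ?_⟩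
  set n := Fintype.card V with hn
  have hne : (Finset.univ : Finset (V ≃ Fin n)).Nonempty :=
    ⟨Fintype.equivFin V, Finset.mem_univ _⟩
  have hcardu : (Finset.univ : Finset (V ≃ Fin n)).card = Nat.factorial n := by
    rw [Finset.card_univ, Fintype.card_equiv (Fintype.equivFin V)]
  have hsum : ∑ α : V ≃ Fin n, (satCount α 𝒞 : ℝ)
      = (𝒞.card : ℝ) * (Nat.factorial n) / 3 := by
    have step : ∀ α : V ≃ Fin n, (satCount α 𝒞 : ℝ)
        = ∑ C ∈ 𝒞, (if Satisfies α C then (1:ℝ) else 0) := by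
      intro α
      rw [satCount, Finset.card_filter]
      push_cast
      rfl
    rw [Finset.sum_congr rfl fun α _ => step α, Finset.sum_comm]
    have per : ∀ C ∈ 𝒞, ∑ α : V ≃ Fin n, (if Satisfies α C then (1:ℝ) else 0)
        = (Nat.factorial n : ℝ) / 3 := by
      intro C hC
      have h3 := main C (h𝒞 C hC)
      have hcf : ∑ α : V ≃ Fin n, (if Satisfies α C then (1:ℝ) else 0)
          = ((Finset.univ.filter (fun α : V ≃ Fin n => Satisfies α C)).card : ℝ) := by
        rw [Finset.card_filter]; push_cast; rfl
      have hr : (Nat.factorial n : ℝ)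
          = 3 * ((Finset.univ.filter (fun α : V ≃ Fin n => Satisfies α C)).card : ℝ) := by
        exact_mod_cast h3.symm
      rw [hcf]
      linarith
    rw [Finset.sum_congr rfl per, Finset.sum_const, nsmul_eq_mul]
    ring
  have havg : ∑ _α : V ≃ Fin n, ((𝒞.card : ℝ)/3) ≤ ∑ α : V ≃ Fin n, (satCount α 𝒞 : ℝ) := by
    rw [hsum, Finset.sum_const, nsmul_eq_mul, hcardu]
    apply le_of_eq
    ring
  obtain ⟨α, _, hα⟩ := Finset.exists_le_of_sum_le hne havg
  exact ⟨α, hα⟩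

end
end
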